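/- arXiv:1309.3727 — 2 statements merged into one kernel-verified Lean document; each statement's English description precedes it below -/
import Mathlib

section
/- Let 𝒢 be an abelian semigroup of affine maps of ℂⁿ generated by f₁,…,f_p (p≥1), set G=Φ(𝒢), and suppose P∈Φ(GA(n,ℂ)) and a partition η=(n₁,…,n_r) of n+1 are such that P⁻¹GP⊂K_{η,r}(ℂ). Let u₀=(e_{1,1},…,e_{r,1})∈ℂ^{n+1} where e_{k,1}=(1,0,…,0)∈ℂ^{n_k}, let v₀=Pu₀ (which lies in {1}×ℂⁿ), and let w₀=p₂(v₀)∈ℂⁿ. Then the following are equivalent: (i) 𝒢 is hypercyclic; (ii) J_𝒢(w₀)=ℂⁿ; (iii) the orbit 𝒢(w₀) is dense in ℂⁿ. -/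
/-!
Conjugating by `P = Φ(φ)` turns `𝒢` into a commuting set `S = P⁻¹ Φ(𝒢) P ⊆ K_{η,r}(ℂ)` of
matrices acting linearly on `ℂ^{n+1}`, and `x ↦ P⁻¹ (1, x)` identifies `ℂⁿ` with the hyperplane
`{z₀ = 1}` and `w₀` with `u₀`. Two properties of `u₀` then carry the argument.

If some orbit `S ζ` is dense in the hyperplane, it spans `ℂ^{n+1}`, so some `A` in the linear
span of `S` maps `ζ` to `u₀`. Such an `A` lies in `K_{η,r}(ℂ)`, is invertible (its diagonal is
read off at the block starts, where `A ζ = u₀` has entries `1`) and commutes with `S`, so it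
carries the dense orbit `S ζ` onto `S u₀`.

If every point of the hyperplane is a limit of `N_m z_m` with `N_m ∈ S` and `z_m → u₀`, then
`N ↦ N u₀` is injective on the span of `S`: a row-by-row argument uses that `N_{ii}` stays
bounded along such sequences. Its linear left inverse `G` gives `N z = N u₀ + G(N u₀)(z - u₀)`,
which forces `N_m u₀ → lim N_m z_m`.

Finally, a dense orbit has `J = ℂⁿ`: removing the finitely many short words keeps it dense.
-/

open Filter Topology

/-- An affine map `x ↦ A x + a` on `ℂⁿ`, encoded by the pair `(A, a)`
    of its linear part and translation part. -/
abbrev AffMap (n : ℕ) := Matrix (Fin n) (Fin n) ℂ × (Fin n → ℂ)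

/-- The action of the affine map `f = (A, a)` on a vector: `f x = A x + a`. -/
noncomputable def affApply {n : ℕ} (f : AffMap n) (x : Fin n → ℂ) : Fin n → ℂ :=
  f.1.mulVec x + f.2

/-- The composition of affine maps, as pairs: `(A,a) ∘ (B,b) = (A B, A b + a)`. -/
noncomputable def affComp {n : ℕ} (f g : AffMap n) : AffMap n :=
  (f.1 * g.1, f.1.mulVec g.2 + f.2)

/-- The map `f₁^{k₁} ∘ f₂^{k₂} ∘ ⋯ ∘ f_p^{k_p}`. -/
noncomputable def wordApply {n p : ℕ} (f : Fin p → AffMap n) (k : Fin p → ℕ) :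
    (Fin n → ℂ) → (Fin n → ℂ) :=
  (List.ofFn fun j => (affApply (f j))^[k j]).foldr (· ∘ ·) id

/-- The orbit `𝒢(x)` of `x` under the semigroup `𝒢` generated by `f₁,…,f_p`. -/
def affOrbit {n p : ℕ} (f : Fin p → AffMap n) (x : Fin n → ℂ) : Set (Fin n → ℂ) :=
  {y | ∃ k : Fin p → ℕ, 1 ≤ ∑ j, k j ∧ wordApply f k x = y}

/-- The extended limit set `J_𝒢(x)` of the semigroup generated by `f₁,…,f_p`. -/
def Jset {n p : ℕ} (f : Fin p → AffMap n) (x : Fin n → ℂ) : Set (Fin n → ℂ) :=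
  {y | ∃ (xs : ℕ → Fin n → ℂ) (k : ℕ → Fin p → ℕ),
    Tendsto xs atTop (𝓝 x) ∧
    Tendsto (fun m => ∑ j, k m j) atTop atTop ∧
    Tendsto (fun m => wordApply f (k m) (xs m)) atTop (𝓝 y)}

/-- `𝒢` is hypercyclic: some orbit is dense. -/
def AffHypercyclic {n p : ℕ} (f : Fin p → AffMap n) : Prop :=
  ∃ v : Fin n → ℂ, Dense (affOrbit f v)

/-- The embedding `Φ : MA(n,ℂ) → M_{n+1}(ℂ)`, `(A,a) ↦ [[1,0],[a,A]]`. -/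
def Phi {n : ℕ} (f : AffMap n) : Matrix (Fin (n + 1)) (Fin (n + 1)) ℂ :=
  Matrix.of fun i j =>
    Fin.cases (Fin.cases (1 : ℂ) (fun _ => 0) j)
      (fun i' => Fin.cases (f.2 i') (fun j' => f.1 i' j') j) i

/-- The matrix `B₁^{k₁} B₂^{k₂} ⋯ B_p^{k_p}`. -/
noncomputable def wordMat {m p : ℕ} (B : Fin p → Matrix (Fin m) (Fin m) ℂ) (k : Fin p → ℕ) :
    Matrix (Fin m) (Fin m) ℂ :=
  (List.ofFn fun j => B j ^ k j).prod

/-- The index at which the `k`-th diagonal block of the partition `η` begins. -/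
def blockStart {r : ℕ} (η : Fin r → ℕ) (k : Fin r) : ℕ :=
  ∑ l ∈ Finset.Iio k, η l

/-- `i` is an index belonging to the `k`-th block of the partition `η`. -/
def inBlock {r m : ℕ} (η : Fin r → ℕ) (k : Fin r) (i : Fin m) : Prop :=
  blockStart η k ≤ (i : ℕ) ∧ (i : ℕ) < blockStart η k + η k

/-- `K_{η,r}(ℂ) = T_{n₁}(ℂ) ⊕ ⋯ ⊕ T_{n_r}(ℂ)`: block-diagonal matrices whose
    `k`-th diagonal block is lower triangular with constant diagonal. -/
def Kset (n r : ℕ) (η : Fin r → ℕ) : Set (Matrix (Fin (n + 1)) (Fin (n + 1)) ℂ) :=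
  {A | (∀ i j : Fin (n + 1), (¬ ∃ k, inBlock η k i ∧ inBlock η k j) → A i j = 0) ∧
       (∀ i j : Fin (n + 1), (∃ k, inBlock η k i ∧ inBlock η k j) → (i : ℕ) < (j : ℕ) → A i j = 0) ∧
       (∀ k : Fin r, ∀ i j : Fin (n + 1), inBlock η k i → inBlock η k j → A i i = A j j)}

/-- `U' ⊆ ℂⁿ`: those `x` such that `(1,x) ∈ ∏_k (ℂ* × ℂ^{n_k-1})`, i.e. the
    coordinate of `(1,x)` at the start of each block is nonzero. -/
def Uprime (n r : ℕ) (η : Fin r → ℕ) : Set (Fin n → ℂ) :=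
  {x | ∀ k : Fin r, ∀ i : Fin (n + 1), (i : ℕ) = blockStart η k → (Fin.cons 1 x : Fin (n + 1) → ℂ) i ≠ 0}

/-- The set of scalar matrices `{λ I : λ ∈ ℂ}`. -/
def scalarMats (m : ℕ) : Set (Matrix (Fin m) (Fin m) ℂ) :=
  Set.range fun c : ℂ => c • (1 : Matrix (Fin m) (Fin m) ℂ)

/-- The vector `u₀ = (e_{1,1}, …, e_{r,1}) ∈ ℂ^{n+1}`: coordinate `1` at the
    start of each block, `0` elsewhere. -/
noncomputable def u0vec (n r : ℕ) (η : Fin r → ℕ) : Fin (n + 1) → ℂ :=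
  open Classical in
  fun i => if ∃ k : Fin r, (i : ℕ) = blockStart η k then 1 else 0

open Filter Topology Matrix

section Partition

variable {r : ℕ} {η : Fin r → ℕ}

lemma blockStart_add_le_of_lt {k k' : Fin r} (h : k < k') :
    blockStart η k + η k ≤ blockStart η k' := by
  have hsub : insert k (Finset.Iio k) ⊆ Finset.Iio k' :=
    Finset.insert_subset (Finset.mem_Iio.mpr h) (Finset.Iio_subset_Iio h.le)
  calc blockStart η k + η k = ∑ l ∈ insert k (Finset.Iio k), η l := by
        rw [Finset.sum_insert (by simp), add_comm, blockStart]
    _ ≤ blockStart η k' := Finset.sum_le_sum_of_subset hsub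

lemma inBlock_unique {m : ℕ} {k k' : Fin r} {i : Fin m} (h : inBlock η k i)
    (h' : inBlock η k' i) : k = k' := by
  rcases lt_trichotomy k k' with hlt | heq | hlt
  · have := blockStart_add_le_of_lt (η := η) hlt
    have := h.2; have := h'.1; omega
  · exact heq
  · have := blockStart_add_le_of_lt (η := η) hlt
    have := h.1; have := h'.2; omega

lemma blockStart_eq_sum_castLE (k : Fin r) :
    blockStart η k = ∑ l : Fin k, η (Fin.castLE k.2.le l) := by
  have : Finset.univ.map (Fin.castLEEmb k.2.le) = Finset.Iio k := by
    ext l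
    simp only [Finset.mem_map, Finset.mem_univ, true_and, Finset.mem_Iio, Fin.castLEEmb_apply]
    exact ⟨fun ⟨a, ha⟩ => ha ▸ a.2, fun h => ⟨⟨l, h⟩, rfl⟩⟩
  rw [blockStart, ← this, Finset.sum_map]
  rfl

variable {n : ℕ}

lemma exists_inBlock (hsum : ∑ k, η k = n + 1) (i : Fin (n + 1)) : ∃ k, inBlock η k i := by
  obtain ⟨⟨k, j⟩, hkj⟩ := finSigmaFinEquiv.surjective (i.cast hsum.symm)
  have := congrArg Fin.val hkj
  simp only [finSigmaFinEquiv_apply, Fin.val_cast] at this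
  refine ⟨k, ?_, ?_⟩ <;> rw [blockStart_eq_sum_castLE] <;> omega

lemma exists_blockStart_inBlock (hsum : ∑ k, η k = n + 1) (i : Fin (n + 1)) :
    ∃ (k : Fin r) (s : Fin (n + 1)), (s : ℕ) = blockStart η k ∧ inBlock η k s ∧ inBlock η k i := by
  obtain ⟨k, hi⟩ := exists_inBlock hsum i
  have hs : blockStart η k < blockStart η k + η k := by have := hi.1; have := hi.2; omega
  exact ⟨k, ⟨blockStart η k, hi.1.trans_lt i.2⟩, rfl, ⟨le_rfl, hs⟩, hi⟩

lemma u0vec_of_eq_blockStart {k : Fin r} {s : Fin (n + 1)} (hs : (s : ℕ) = blockStart η k) :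
    u0vec n r η s = 1 :=
  if_pos ⟨k, hs⟩

lemma eq_zero_of_eq_blockStart_of_inBlock_zero {k : Fin r} {s : Fin (n + 1)}
    (hs : (s : ℕ) = blockStart η k) (h0 : inBlock η k (0 : Fin (n + 1))) : s = 0 :=
  Fin.ext (by rw [Fin.val_zero, hs]; exact Nat.le_zero.mp h0.1)

lemma u0vec_zero (hsum : ∑ k, η k = n + 1) : u0vec n r η 0 = 1 := by
  obtain ⟨k, s, hs, -, h0⟩ := exists_blockStart_inBlock hsum 0
  rw [← eq_zero_of_eq_blockStart_of_inBlock_zero hs h0]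
  exact u0vec_of_eq_blockStart hs

end Partition

lemma Matrix.mulVec_apply_eq_diag_mul {ι R : Type*} [Fintype ι] [NonUnitalNonAssocSemiring R]
    (A : Matrix ι ι R) (z : ι → R) (i : ι) (h : ∀ j ≠ i, A i j * z j = 0) :
    (A *ᵥ z) i = A i i * z i :=
  Finset.sum_eq_single i (fun j _ hj => h j hj) (by simp)

namespace Kset

variable {n r : ℕ} {η : Fin r → ℕ} {A : Matrix (Fin (n + 1)) (Fin (n + 1)) ℂ}

lemma isLowerTriangular (hA : A ∈ Kset n r η) : A.IsLowerTriangular := by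
  intro i j h
  by_cases hij : ∃ k, inBlock η k i ∧ inBlock η k j
  · exact hA.2.1 i j hij h
  · exact hA.1 i j hij

lemma mulVec_apply_of_eq_blockStart (hA : A ∈ Kset n r η) {k : Fin r} {s : Fin (n + 1)}
    (hs : (s : ℕ) = blockStart η k) (hsk : inBlock η k s) (z : Fin (n + 1) → ℂ) :
    (A *ᵥ z) s = A s s * z s := by
  refine A.mulVec_apply_eq_diag_mul z s fun j hj => ?_
  rcases lt_or_gt_of_ne hj with hj | hj
  · have hsj : ¬ ∃ k', inBlock η k' s ∧ inBlock η k' j := by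
      rintro ⟨k', hs', hj'⟩
      cases inBlock_unique hs' hsk
      have := hj'.1
      rw [Fin.lt_def] at hj
      omega
    rw [hA.1 s j hsj, zero_mul]
  · rw [isLowerTriangular hA hj, zero_mul]

lemma mulVec_apply_zero (hsum : ∑ k, η k = n + 1) (hA : A ∈ Kset n r η)
    (z : Fin (n + 1) → ℂ) : (A *ᵥ z) 0 = A 0 0 * z 0 := by
  obtain ⟨k, s, hs, hsk, h0⟩ := exists_blockStart_inBlock hsum 0
  obtain rfl := eq_zero_of_eq_blockStart_of_inBlock_zero hs h0
  exact mulVec_apply_of_eq_blockStart hA hs hsk z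

lemma isUnit_det_of_mulVec_eq_u0vec (hsum : ∑ k, η k = n + 1) (hA : A ∈ Kset n r η)
    {ζ : Fin (n + 1) → ℂ} (hζ : A *ᵥ ζ = u0vec n r η) : IsUnit A.det := by
  rw [A.det_of_isLowerTriangular (isLowerTriangular hA), isUnit_iff_ne_zero,
    Finset.prod_ne_zero_iff]
  intro i _
  obtain ⟨k, s, hs, hsk, hi⟩ := exists_blockStart_inBlock hsum i
  have h1 : A s s * ζ s = 1 := by
    rw [← mulVec_apply_of_eq_blockStart hA hs hsk, hζ, u0vec_of_eq_blockStart hs]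
  rw [hA.2.2 k i s hi hsk]
  exact left_ne_zero_of_mul_eq_one h1

variable (n r η) in
def submodule : Submodule ℂ (Matrix (Fin (n + 1)) (Fin (n + 1)) ℂ) where
  carrier := Kset n r η
  zero_mem' := ⟨fun _ _ _ => rfl, fun _ _ _ _ => rfl, fun _ _ _ _ _ => rfl⟩
  add_mem' {A B} hA hB := by
    refine ⟨fun i j h => ?_, fun i j h hij => ?_, fun k i j hi hj => ?_⟩
    · simp [hA.1 i j h, hB.1 i j h]
    · simp [hA.2.1 i j h hij, hB.2.1 i j h hij]
    · simp [hA.2.2 k i j hi hj, hB.2.2 k i j hi hj]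
  smul_mem' c A hA := by
    refine ⟨fun i j h => ?_, fun i j h hij => ?_, fun k i j hi hj => ?_⟩
    · simp [hA.1 i j h]
    · simp [hA.2.1 i j h hij]
    · simp [hA.2.2 k i j hi hj]

end Kset

section CommutingFamily

variable {n r : ℕ} {η : Fin r → ℕ} {S : Set (Matrix (Fin (n + 1)) (Fin (n + 1)) ℂ)}

lemma span_setOf_apply_zero_eq_one : Submodule.span ℂ {w : Fin (n + 1) → ℂ | w 0 = 1} = ⊤ := by
  refine eq_top_iff.2 fun x _ => ?_
  have he : (Pi.single 0 1 : Fin (n + 1) → ℂ) ∈ {w : Fin (n + 1) → ℂ | w 0 = 1} := by simp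
  have hx : x + (1 - x 0) • Pi.single 0 1 ∈ {w : Fin (n + 1) → ℂ | w 0 = 1} := by simp
  have : x = (x + (1 - x 0) • Pi.single 0 1) - (1 - x 0) • Pi.single 0 1 := by abel
  rw [this]
  exact Submodule.sub_mem _ (Submodule.subset_span hx)
    (Submodule.smul_mem _ _ (Submodule.subset_span he))

lemma mem_Kset_of_mem_span (hSK : S ⊆ Kset n r η) {B : Matrix (Fin (n + 1)) (Fin (n + 1)) ℂ}
    (hB : B ∈ Submodule.span ℂ S) : B ∈ Kset n r η :=
  (Submodule.span_le (p := Kset.submodule n r η)).2 hSK hB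

lemma mem_centralizer_of_mem_span (hS : S ⊆ S.centralizer)
    {B : Matrix (Fin (n + 1)) (Fin (n + 1)) ℂ} (hB : B ∈ Submodule.span ℂ S) :
    B ∈ S.centralizer :=
  (Submodule.span_le (p := (Subalgebra.centralizer ℂ S).toSubmodule)).2 hS hB

lemma exists_mem_span_mulVec_eq {ζ : Fin (n + 1) → ℂ}
    (hdense : {w | w 0 = 1} ⊆ closure ((· *ᵥ ζ) '' S)) (y : Fin (n + 1) → ℂ) :
    ∃ A ∈ Submodule.span ℂ S, A *ᵥ ζ = y := by
  have htop : Submodule.span ℂ ((· *ᵥ ζ) '' S) = ⊤ := by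
    rw [eq_top_iff, ← span_setOf_apply_zero_eq_one, Submodule.span_le]
    exact hdense.trans
      (closure_minimal Submodule.subset_span (Submodule.closed_of_finiteDimensional _))
  have hy : y ∈ (Submodule.span ℂ S).map ((mulVecBilin ℂ ℂ).flip ζ) := by
    rw [Submodule.map_span]
    exact htop ▸ Submodule.mem_top
  exact hy

theorem subset_closure_orbit_u0vec_of_dense_orbit (hsum : ∑ k, η k = n + 1)
    (hSK : S ⊆ Kset n r η) (hS : S ⊆ S.centralizer) {ζ : Fin (n + 1) → ℂ} (hζ : ζ 0 = 1)
    (hdense : {w | w 0 = 1} ⊆ closure ((· *ᵥ ζ) '' S)) :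
    {w | w 0 = 1} ⊆ closure ((· *ᵥ u0vec n r η) '' S) := by
  obtain ⟨A, hAS, hAζ⟩ := exists_mem_span_mulVec_eq hdense (u0vec n r η)
  have hAK := mem_Kset_of_mem_span hSK hAS
  have hA : A * A⁻¹ = 1 := mul_nonsing_inv A (Kset.isUnit_det_of_mulVec_eq_u0vec hsum hAK hAζ)
  have hA00 : A 0 0 = 1 := by
    have := Kset.mulVec_apply_zero hsum hAK ζ
    rwa [hAζ, u0vec_zero hsum, hζ, mul_one, eq_comm] at this
  have himage : (A *ᵥ ·) '' ((· *ᵥ ζ) '' S) = (· *ᵥ u0vec n r η) '' S := by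
    rw [Set.image_image]
    refine Set.image_congr fun N hN => ?_
    rw [mulVec_mulVec, ← mem_centralizer_of_mem_span hS hAS N hN, ← mulVec_mulVec, hAζ]
  intro w hw
  have hw' : A⁻¹ *ᵥ w ∈ {w | w 0 = 1} := by
    have := Kset.mulVec_apply_zero hsum hAK (A⁻¹ *ᵥ w)
    rwa [mulVec_mulVec, hA, one_mulVec, hA00, one_mul, hw, eq_comm] at this
  rw [← himage]
  refine image_closure_subset_closure_image (continuous_const.matrix_mulVec continuous_id)
    ⟨_, hdense hw', ?_⟩
  simp only [id, mulVec_mulVec, hA, one_mulVec]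

end CommutingFamily

lemma tendsto_of_tendsto_add_apply {ι 𝕜 E : Type*} [NontriviallyNormedField 𝕜]
    [NormedAddCommGroup E] [NormedSpace 𝕜 E] {l : Filter ι} {T : ι → E →L[𝕜] E} {v : ι → E}
    {w : E} (hT : Tendsto T l (𝓝 0)) (hv : Tendsto (fun m => v m + T m (v m)) l (𝓝 w)) :
    Tendsto v l (𝓝 w) := by
  -- once `‖T m‖ ≤ 1/2`, the sequence `v` is bounded by twice the bound of `v + T v`
  have hbound : ∀ᶠ m in l, ‖v m‖ ≤ 2 * (‖w‖ + 1) := by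
    filter_upwards [hv.norm.eventually (gt_mem_nhds (lt_add_one ‖w‖)),
      hT.norm.eventually (gt_mem_nhds (by simp : ‖(0 : E →L[𝕜] E)‖ < 1 / 2))] with m hy hTm
    have : ‖v m‖ ≤ ‖v m + T m (v m)‖ + ‖T m‖ * ‖v m‖ :=
      calc ‖v m‖ = ‖(v m + T m (v m)) - T m (v m)‖ := by rw [add_sub_cancel_right]
        _ ≤ ‖v m + T m (v m)‖ + ‖T m (v m)‖ := norm_sub_le _ _
        _ ≤ ‖v m + T m (v m)‖ + ‖T m‖ * ‖v m‖ := by gcongr; exact (T m).le_opNorm _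
    nlinarith [norm_nonneg (v m)]
  have hTv : Tendsto (fun m => T m (v m)) l (𝓝 0) := by
    refine squeeze_zero_norm' ?_ (by simpa using hT.norm.mul_const (2 * (‖w‖ + 1)))
    filter_upwards [hbound] with m hm
    exact (T m).le_opNorm_of_le hm
  simpa using hv.sub hTv

-- The linear analogue of `Jset`, with no condition on word lengths.
def matLimitSet {ι : Type*} [Fintype ι] (S : Set (Matrix ι ι ℂ)) (u : ι → ℂ) : Set (ι → ℂ) :=
  {w | ∃ (z : ℕ → ι → ℂ) (N : ℕ → Matrix ι ι ℂ), (∀ᶠ m in atTop, N m ∈ S) ∧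
    Tendsto z atTop (𝓝 u) ∧ Tendsto (fun m => N m *ᵥ z m) atTop (𝓝 w)}

section LimitSet

variable {n r : ℕ} {η : Fin r → ℕ} {S : Set (Matrix (Fin (n + 1)) (Fin (n + 1)) ℂ)}

lemma row_eq_zero_of_forall_lt (hsum : ∑ k, η k = n + 1) (hSK : S ⊆ Kset n r η)
    (hS : S ⊆ S.centralizer) (hJ : {w | w 0 = 1} ⊆ matLimitSet S (u0vec n r η))
    {B : Matrix (Fin (n + 1)) (Fin (n + 1)) ℂ} (hB : B ∈ Submodule.span ℂ S)
    (hBu : B *ᵥ u0vec n r η = 0) (i : Fin (n + 1)) (hlt : ∀ j < i, B j = 0) : B i = 0 := by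
  obtain ⟨k, s, hs, hsk, hik⟩ := exists_blockStart_inBlock hsum i
  have hrow : ∀ N ∈ S, ∀ z, (B *ᵥ (N *ᵥ z)) i = N s s * (B *ᵥ z) i := by
    intro N hN z
    rw [mulVec_mulVec, ← mem_centralizer_of_mem_span hS hB N hN, ← mulVec_mulVec,
      ← (hSK hN).2.2 k i s hik hsk]
    refine N.mulVec_apply_eq_diag_mul _ i fun j hj => ?_
    rcases lt_or_gt_of_ne hj with hj | hj
    · rw [show (B *ᵥ z) j = 0 by simp [mulVec, hlt j hj], mul_zero]
    · rw [Kset.isLowerTriangular (hSK hN) hj, zero_mul]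
  -- along `N_m z_m → w`, the factor `N_m s s = (N_m z_m) s / z_m s` stays bounded
  -- while `(B z_m) i → (B u₀) i = 0`
  have hvanish : ∀ w : Fin (n + 1) → ℂ, w 0 = 1 → (B *ᵥ w) i = 0 := by
    intro w hw
    obtain ⟨z, N, hN, hz, hNz⟩ := hJ hw
    have hzs : Tendsto (fun m => z m s) atTop (𝓝 1) := by
      simpa [u0vec_of_eq_blockStart hs] using tendsto_pi_nhds.1 hz s
    have hB_cont : Continuous (B *ᵥ ·) := continuous_const.matrix_mulVec continuous_id
    have hBz : Tendsto (fun m => (B *ᵥ z m) i) atTop (𝓝 0) := by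
      simpa [hBu] using tendsto_pi_nhds.1 ((hB_cont.tendsto _).comp hz) i
    have hlim : Tendsto (fun m => (B *ᵥ (N m *ᵥ z m)) i) atTop (𝓝 ((B *ᵥ w) i)) :=
      tendsto_pi_nhds.1 ((hB_cont.tendsto _).comp hNz) i
    have hlim' : Tendsto (fun m => (N m *ᵥ z m) s / z m s * (B *ᵥ z m) i) atTop (𝓝 0) := by
      simpa using ((tendsto_pi_nhds.1 hNz s).div hzs one_ne_zero).mul hBz
    refine tendsto_nhds_unique hlim (hlim'.congr' ?_)
    filter_upwards [hN, hzs.eventually_ne one_ne_zero] with m hm hm0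
    rw [hrow _ hm, Kset.mulVec_apply_of_eq_blockStart (hSK hm) hs hsk, mul_div_cancel_right₀ _ hm0]
  have : LinearMap.proj i ∘ₗ B.mulVecLin = 0 :=
    LinearMap.ext_on span_setOf_apply_zero_eq_one fun w hw => hvanish w hw
  exact dotProduct_eq_zero _ fun w => congr($this w)

lemma eq_zero_of_mem_span_of_mulVec_u0vec_eq_zero (hsum : ∑ k, η k = n + 1)
    (hSK : S ⊆ Kset n r η) (hS : S ⊆ S.centralizer)
    (hJ : {w | w 0 = 1} ⊆ matLimitSet S (u0vec n r η))
    {B : Matrix (Fin (n + 1)) (Fin (n + 1)) ℂ} (hB : B ∈ Submodule.span ℂ S)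
    (hBu : B *ᵥ u0vec n r η = 0) : B = 0 :=
  funext fun i => WellFoundedLT.induction i fun i hlt =>
    row_eq_zero_of_forall_lt hsum hSK hS hJ hB hBu i hlt

theorem subset_closure_orbit_u0vec_of_subset_matLimitSet (hsum : ∑ k, η k = n + 1)
    (hSK : S ⊆ Kset n r η) (hS : S ⊆ S.centralizer)
    (hJ : {w | w 0 = 1} ⊆ matLimitSet S (u0vec n r η)) :
    {w | w 0 = 1} ⊆ closure ((· *ᵥ u0vec n r η) '' S) := by
  set u := u0vec n r η
  have hker : LinearMap.ker (((mulVecBilin ℂ ℂ).flip u).domRestrict (Submodule.span ℂ S)) = ⊥ :=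
    LinearMap.ker_eq_bot'.2 fun B hBu =>
      Subtype.ext (eq_zero_of_mem_span_of_mulVec_u0vec_eq_zero hsum hSK hS hJ B.2 hBu)
  obtain ⟨g, hg⟩ := LinearMap.exists_leftInverse_of_injective _ hker
  -- `T δ v = g(v) δ`: on the orbit, `N z = N u₀ + T (z - u₀) (N u₀)`
  let T : (Fin (n + 1) → ℂ) →ₗ[ℂ] (Fin (n + 1) → ℂ) →L[ℂ] (Fin (n + 1) → ℂ) :=
    LinearMap.toContinuousLinearMap.toLinearMap ∘ₗ
      (mulVecBilin ℂ ℂ ∘ₗ (Submodule.span ℂ S).subtype ∘ₗ g).flip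
  have hT : ∀ N ∈ S, ∀ δ, T δ (N *ᵥ u) = N *ᵥ δ := by
    intro N hN δ
    have hgN : g (N *ᵥ u) = ⟨N, Submodule.subset_span hN⟩ :=
      congr($hg ⟨N, Submodule.subset_span hN⟩)
    change (g (N *ᵥ u) : Matrix (Fin (n + 1)) (Fin (n + 1)) ℂ) *ᵥ δ = N *ᵥ δ
    rw [hgN]
  intro w hw
  obtain ⟨z, N, hN, hz, hNz⟩ := hJ hw
  have hTz : Tendsto (fun m => T (z m - u)) atTop (𝓝 0) := by
    have := (T.continuous_of_finiteDimensional.tendsto 0).comp (by simpa using hz.sub_const u)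
    rwa [map_zero] at this
  refine mem_closure_of_tendsto (tendsto_of_tendsto_add_apply hTz (hNz.congr' ?_))
    (hN.mono fun m hm => ⟨N m, hm, rfl⟩)
  filter_upwards [hN] with m hm
  rw [hT _ hm, ← mulVec_add, add_sub_cancel]

end LimitSet

section Phi

variable {n : ℕ}

@[simp] lemma Phi_zero_zero (g : AffMap n) : Phi g 0 0 = 1 := rfl
@[simp] lemma Phi_zero_succ (g : AffMap n) (j : Fin n) : Phi g 0 j.succ = 0 := rfl
@[simp] lemma Phi_succ_zero (g : AffMap n) (i : Fin n) : Phi g i.succ 0 = g.2 i := rfl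
@[simp] lemma Phi_succ_succ (g : AffMap n) (i j : Fin n) : Phi g i.succ j.succ = g.1 i j := rfl

lemma Phi_mulVec_apply_zero (g : AffMap n) (z : Fin (n + 1) → ℂ) : (Phi g *ᵥ z) 0 = z 0 := by
  simp [mulVec, dotProduct, Fin.sum_univ_succ]

lemma Phi_mulVec_cons (g : AffMap n) (x : Fin n → ℂ) :
    Phi g *ᵥ Fin.cons 1 x = Fin.cons 1 (affApply g x) := by
  refine Fin.cases ?_ (fun i => ?_) |> funext
  · simpa using Phi_mulVec_apply_zero g (Fin.cons 1 x)
  · simp [mulVec, dotProduct, Fin.sum_univ_succ, affApply, add_comm]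

lemma Phi_affComp (f g : AffMap n) : Phi (affComp f g) = Phi f * Phi g := by
  ext i j
  refine Fin.cases (Fin.cases ?_ fun j => ?_ ) (fun i => Fin.cases ?_ fun j => ?_) i j <;>
    simp [mul_apply, Fin.sum_univ_succ, affComp, mulVec, dotProduct, add_comm]

lemma det_Phi (g : AffMap n) : (Phi g).det = g.1.det := by
  rw [det_succ_row_zero, Fin.sum_univ_succ]
  simp only [Phi_zero_succ, mul_zero, zero_mul, Finset.sum_const_zero, add_zero, Phi_zero_zero,
    Fin.val_zero, pow_zero, one_mul, Fin.succAbove_zero]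
  rfl

lemma Phi_pow_mulVec_cons (g : AffMap n) (m : ℕ) (x : Fin n → ℂ) :
    Phi g ^ m *ᵥ Fin.cons 1 x = Fin.cons 1 ((affApply g)^[m] x) := by
  induction m generalizing x with
  | zero => simp
  | succ m ih =>
    rw [pow_succ, ← mulVec_mulVec, Phi_mulVec_cons, ih, Function.iterate_succ_apply]

lemma ofFn_prod_mulVec_cons {p : ℕ} (M : Fin p → Matrix (Fin (n + 1)) (Fin (n + 1)) ℂ)
    (F : Fin p → (Fin n → ℂ) → Fin n → ℂ) (hMF : ∀ j x, M j *ᵥ Fin.cons 1 x = Fin.cons 1 (F j x))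
    (x : Fin n → ℂ) :
    (List.ofFn M).prod *ᵥ Fin.cons 1 x = Fin.cons 1 ((List.ofFn F).foldr (· ∘ ·) id x) := by
  induction p with
  | zero => simp
  | succ p ih =>
    rw [List.ofFn_succ, List.ofFn_succ, List.prod_cons, List.foldr_cons, ← mulVec_mulVec,
      ih _ _ fun j => hMF j.succ, hMF 0]
    rfl

lemma wordMat_Phi_mulVec_cons {p : ℕ} (f : Fin p → AffMap n) (k : Fin p → ℕ) (x : Fin n → ℂ) :
    wordMat (fun j => Phi (f j)) k *ᵥ Fin.cons 1 x = Fin.cons 1 (wordApply f k x) :=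
  ofFn_prod_mulVec_cons _ _ (fun j => Phi_pow_mulVec_cons (f j) (k j)) x

end Phi

lemma commute_wordMat {m p : ℕ} {B : Fin p → Matrix (Fin m) (Fin m) ℂ}
    (hB : ∀ i j, Commute (B i) (B j)) (k l : Fin p → ℕ) :
    Commute (wordMat B k) (wordMat B l) := by
  refine Commute.list_prod_left _ _ fun X hX => Commute.list_prod_right _ _ fun Y hY => ?_
  obtain ⟨i, rfl⟩ := List.mem_ofFn.1 hX
  obtain ⟨j, rfl⟩ := List.mem_ofFn.1 hY
  exact (hB i j).pow_pow _ _

section Conjugation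

variable {n p : ℕ} {P : Matrix (Fin (n + 1)) (Fin (n + 1)) ℂ}

noncomputable def conjLift (P : Matrix (Fin (n + 1)) (Fin (n + 1)) ℂ) (x : Fin n → ℂ) :
    Fin (n + 1) → ℂ :=
  P⁻¹ *ᵥ Fin.cons 1 x

noncomputable def conjWords (f : Fin p → AffMap n) (P : Matrix (Fin (n + 1)) (Fin (n + 1)) ℂ) :
    Set (Matrix (Fin (n + 1)) (Fin (n + 1)) ℂ) :=
  (fun k => P⁻¹ * wordMat (fun j => Phi (f j)) k * P) '' {k | 1 ≤ ∑ j, k j}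

lemma continuous_conjLift : Continuous (conjLift (n := n) P) :=
  continuous_const.matrix_mulVec (continuous_const.finCons continuous_id)

lemma tail_mulVec_conjLift (hP : IsUnit P.det) (x : Fin n → ℂ) :
    Fin.tail (P *ᵥ conjLift P x) = x := by
  rw [conjLift, mulVec_mulVec, mul_nonsing_inv P hP, one_mulVec, Fin.tail_cons]

lemma isEmbedding_conjLift (hP : IsUnit P.det) : IsEmbedding (conjLift (n := n) P) :=
  Function.LeftInverse.isEmbedding (f := fun z => Fin.tail (P *ᵥ z)) (tail_mulVec_conjLift hP)
    (continuous_pi fun i => (continuous_apply i.succ).comp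
      (continuous_const.matrix_mulVec continuous_id)) continuous_conjLift

lemma conjLift_tail_mulVec (hP : IsUnit P.det) (hP0 : ∀ z, (P *ᵥ z) 0 = z 0)
    {z : Fin (n + 1) → ℂ} (hz : z 0 = 1) : conjLift P (Fin.tail (P *ᵥ z)) = z := by
  rw [conjLift, ← hz, ← hP0 z, Fin.cons_self_tail, mulVec_mulVec, nonsing_inv_mul P hP,
    one_mulVec]

lemma conjLift_apply_zero (hP : IsUnit P.det) (hP0 : ∀ z, (P *ᵥ z) 0 = z 0) (x : Fin n → ℂ) :
    conjLift P x 0 = 1 := by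
  rw [conjLift, ← hP0 (P⁻¹ *ᵥ _), mulVec_mulVec, mul_nonsing_inv P hP, one_mulVec,
    Fin.cons_zero]

lemma range_conjLift (hP : IsUnit P.det) (hP0 : ∀ z, (P *ᵥ z) 0 = z 0) :
    Set.range (conjLift P) = {z | z 0 = 1} :=
  Set.Subset.antisymm (Set.range_subset_iff.2 (conjLift_apply_zero hP hP0))
    fun _ hz => ⟨_, conjLift_tail_mulVec hP hP0 hz⟩

lemma dense_iff_subset_closure_image_conjLift (hP : IsUnit P.det)
    (hP0 : ∀ z, (P *ᵥ z) 0 = z 0) (A : Set (Fin n → ℂ)) :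
    Dense A ↔ {z | z 0 = 1} ⊆ closure (conjLift P '' A) := by
  rw [(isEmbedding_conjLift hP).isInducing.dense_iff, ← range_conjLift hP hP0,
    Set.range_subset_iff]

variable {f : Fin p → AffMap n}

lemma conjWord_mulVec_conjLift (hP : IsUnit P.det) (k : Fin p → ℕ) (x : Fin n → ℂ) :
    (P⁻¹ * wordMat (fun j => Phi (f j)) k * P) *ᵥ conjLift P x = conjLift P (wordApply f k x) := by
  rw [conjLift, mulVec_mulVec, Matrix.mul_assoc, Matrix.mul_assoc, mul_nonsing_inv P hP,
    Matrix.mul_one, ← mulVec_mulVec, wordMat_Phi_mulVec_cons, conjLift]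

lemma image_conjLift_affOrbit (hP : IsUnit P.det) (x : Fin n → ℂ) :
    conjLift P '' affOrbit f x = (· *ᵥ conjLift P x) '' conjWords f P := by
  simp only [affOrbit, conjWords, Set.image_image, conjWord_mulVec_conjLift hP]
  ext; simp

lemma conjWords_subset_centralizer (hP : IsUnit P.det)
    (hf : ∀ i j, Commute (Phi (f i)) (Phi (f j))) :
    conjWords f P ⊆ (conjWords f P).centralizer := by
  rintro _ ⟨k, -, rfl⟩ _ ⟨l, -, rfl⟩
  have hconj : ∀ X Y : Matrix (Fin (n + 1)) (Fin (n + 1)) ℂ,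
      P⁻¹ * X * P * (P⁻¹ * Y * P) = P⁻¹ * (X * Y) * P := by
    intro X Y
    simp only [Matrix.mul_assoc]
    rw [← Matrix.mul_assoc P, mul_nonsing_inv P hP, Matrix.one_mul]
  rw [hconj, hconj, (commute_wordMat hf l k).eq]

lemma subset_matLimitSet_of_Jset_eq_univ (hP : IsUnit P.det) (hP0 : ∀ z, (P *ᵥ z) 0 = z 0)
    {x : Fin n → ℂ} (hJ : Jset f x = Set.univ) :
    {z | z 0 = 1} ⊆ matLimitSet (conjWords f P) (conjLift P x) := by
  intro w hw
  obtain ⟨xs, k, hxs, hk, hy⟩ := hJ ▸ Set.mem_univ (Fin.tail (P *ᵥ w))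
  rw [← conjLift_tail_mulVec hP hP0 hw]
  refine ⟨conjLift P ∘ xs, fun m => P⁻¹ * wordMat (fun j => Phi (f j)) (k m) * P,
    (hk.eventually_ge_atTop 1).mono fun m hm => ⟨k m, hm, rfl⟩,
    (continuous_conjLift.tendsto x).comp hxs, ?_⟩
  simpa only [Function.comp_def, conjWord_mulVec_conjLift hP] using
    (continuous_conjLift.tendsto _).comp hy

end Conjugation

section DenseOrbit

variable {n p : ℕ} {f : Fin p → AffMap n} {x : Fin n → ℂ}

lemma exists_wordApply_dist_lt (hp : 1 ≤ p) (hd : Dense (affOrbit f x)) (y : Fin n → ℂ)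
    (m : ℕ) {ε : ℝ} (hε : 0 < ε) :
    ∃ k : Fin p → ℕ, m ≤ ∑ j, k j ∧ dist (wordApply f k x) y < ε := by
  rcases subsingleton_or_nontrivial (Fin n → ℂ) with hn | hn
  · refine ⟨fun _ => m, ?_, by rwa [Subsingleton.elim (wordApply f _ x) y, dist_self]⟩
    simpa using Nat.le_mul_of_pos_left m hp
  · -- the orbit points of length `< m` are finitely many, and removing them keeps the orbit dense
    have hfin : {k : Fin p → ℕ | ∑ j, k j < m}.Finite :=
      (Set.Finite.pi' fun _ => Set.finite_Iio m).subset fun k hk j =>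
        (Finset.single_le_sum (fun _ _ => Nat.zero_le _) (Finset.mem_univ j)).trans_lt hk
    obtain ⟨_, ⟨⟨k, -, rfl⟩, hkF⟩, hdist⟩ :=
      Metric.mem_closure_iff.1 (hd.sdiff_finite (hfin.image (wordApply f · x)) y) ε hε
    exact ⟨k, not_lt.1 fun hk => hkF ⟨k, hk, rfl⟩, by rwa [dist_comm]⟩

theorem Jset_eq_univ_of_dense (hp : 1 ≤ p) (hd : Dense (affOrbit f x)) : Jset f x = Set.univ := by
  refine Set.eq_univ_of_forall fun y => ?_
  choose k hk hdist using fun m : ℕ =>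
    exists_wordApply_dist_lt hp hd y m (Nat.one_div_pos_of_nat (n := m))
  refine ⟨fun _ => x, k, tendsto_const_nhds, tendsto_atTop_mono hk tendsto_id, ?_⟩
  exact tendsto_iff_dist_tendsto_zero.2 (squeeze_zero (fun _ => dist_nonneg) (fun m => (hdist m).le)
    tendsto_one_div_add_atTop_nhds_zero_nat)

end DenseOrbit

theorem hypercyclic_iff_Jset_w0_iff_dense_orbit_w0_general
    (n p r : ℕ) (hp : 1 ≤ p)
    (η : Fin r → ℕ) (hsum : ∑ k, η k = n + 1)
    (f : Fin p → AffMap n)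
    (hcomm : ∀ i j, affComp (f i) (f j) = affComp (f j) (f i))
    (φ : AffMap n) (hφ : IsUnit φ.1)
    (hconj : ∀ k : Fin p → ℕ, 1 ≤ ∑ j, k j →
      (Phi φ)⁻¹ * wordMat (fun j => Phi (f j)) k * Phi φ ∈ Kset n r η)
    (w₀ : Fin n → ℂ)
    (hw₀ : ∀ i : Fin n, w₀ i = (Phi φ).mulVec (u0vec n r η) i.succ) :
    (AffHypercyclic f ↔ Jset f w₀ = Set.univ) ∧
      (Jset f w₀ = Set.univ ↔ Dense (affOrbit f w₀)) := by
  have hP : IsUnit (Phi φ).det := by rwa [det_Phi, ← isUnit_iff_isUnit_det]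
  have hP0 := Phi_mulVec_apply_zero φ
  set S := conjWords f (Phi φ)
  have hSK : S ⊆ Kset n r η := by
    rintro _ ⟨k, hk, rfl⟩
    exact hconj k hk
  have hSS : S ⊆ S.centralizer := conjWords_subset_centralizer hP fun i j => by
    rw [Commute, SemiconjBy, ← Phi_affComp, hcomm, Phi_affComp]
  have hu : conjLift (Phi φ) w₀ = u0vec n r η := by
    rw [show w₀ = Fin.tail (Phi φ *ᵥ u0vec n r η) from funext hw₀,
      conjLift_tail_mulVec hP hP0 (u0vec_zero hsum)]
  have hdense (x : Fin n → ℂ) : Dense (affOrbit f x) ↔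
      {z | z 0 = 1} ⊆ closure ((· *ᵥ conjLift (Phi φ) x) '' S) := by
    rw [dense_iff_subset_closure_image_conjLift hP hP0, image_conjLift_affOrbit hP]
  have hdense₀ := hdense w₀
  rw [hu] at hdense₀
  have hi : AffHypercyclic f → Dense (affOrbit f w₀) := fun ⟨v, hv⟩ =>
    hdense₀.2 (subset_closure_orbit_u0vec_of_dense_orbit hsum hSK hSS
      (conjLift_apply_zero hP hP0 v) ((hdense v).1 hv))
  have hii : Jset f w₀ = Set.univ → Dense (affOrbit f w₀) := fun hJ =>
    hdense₀.2 (subset_closure_orbit_u0vec_of_subset_matLimitSet hsum hSK hSS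
      (hu ▸ subset_matLimitSet_of_Jset_eq_univ hP hP0 hJ))
  exact ⟨⟨fun h => Jset_eq_univ_of_dense hp (hi h), fun h => ⟨w₀, hii h⟩⟩,
    hii, Jset_eq_univ_of_dense hp⟩

/-- **Corollary 1.2.** With `𝒢`, `G = Φ(𝒢)`, `P = Φ(φ)` and the partition `η` as
in Theorem 1.1 (`P⁻¹ G P ⊆ K_{η,r}(ℂ)`), let `u₀ = (e_{1,1},…,e_{r,1})`,
`v₀ = P u₀ ∈ {1}×ℂⁿ` and `w₀ = p₂(v₀)`. The following are equivalent:
(i) `𝒢` is hypercyclic; (ii) `J_𝒢(w₀) = ℂⁿ`; (iii) `𝒢(w₀)` is dense in `ℂⁿ`. -/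
theorem hypercyclic_iff_Jset_w0_iff_dense_orbit_w0
    (n p r : ℕ) (hp : 1 ≤ p) (hr : 1 ≤ r)
    (η : Fin r → ℕ) (hη : ∀ k, 1 ≤ η k) (hsum : ∑ k, η k = n + 1)
    (f : Fin p → AffMap n)
    (hcomm : ∀ i j, affComp (f i) (f j) = affComp (f j) (f i))
    (φ : AffMap n) (hφ : IsUnit φ.1)
    (hconj : ∀ k : Fin p → ℕ, 1 ≤ ∑ j, k j →
      (Phi φ)⁻¹ * wordMat (fun j => Phi (f j)) k * Phi φ ∈ Kset n r η)
    (w₀ : Fin n → ℂ)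
    (hw₀ : ∀ i : Fin n, w₀ i = (Phi φ).mulVec (u0vec n r η) i.succ) :
    (AffHypercyclic f ↔ Jset f w₀ = Set.univ) ∧
      (Jset f w₀ = Set.univ ↔ Dense (affOrbit f w₀)) :=
  hypercyclic_iff_Jset_w0_iff_dense_orbit_w0_general n p r hp η hsum f hcomm φ hφ hconj w₀ hw₀
end

section
/- Let 𝒢 be an abelian semigroup of affine maps of ℂⁿ generated by f₁,…,f_p (p≥1). If 𝒢 is hypercyclic, then J_𝒢(x)=ℂⁿ for every x∈ℂⁿ. -/
open Filter Topology

-- auxiliary lemmas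

lemma affApply_comp {n : ℕ} (f g : AffMap n) :
    affApply (affComp f g) = affApply f ∘ affApply g := by
  funext x
  simp [affApply, affComp, Matrix.mulVec_add, ← Matrix.mulVec_mulVec, add_assoc]

lemma affApply_commute {n : ℕ} (f g : AffMap n) (h : affComp f g = affComp g f) :
    Function.Commute (affApply f) (affApply g) := by
  have h2 := congrArg affApply h
  rw [affApply_comp, affApply_comp] at h2
  exact fun x => congrFun h2 x

lemma wordApply_succ {n p : ℕ} (f : Fin (p + 1) → AffMap n) (k : Fin (p + 1) → ℕ) :
    wordApply f k
      = (affApply (f 0))^[k 0] ∘ wordApply (fun j => f j.succ) (fun j => k j.succ) := by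
  simp [wordApply, List.ofFn_succ]

lemma wordApply_zero' {n p : ℕ} (f : Fin p → AffMap n) :
    wordApply f (fun _ => 0) = id := by
  induction p with
  | zero => simp [wordApply]
  | succ p ih => rw [wordApply_succ]; simp [ih]

lemma commute_wordApply {n p : ℕ} (g : (Fin n → ℂ) → (Fin n → ℂ)) (f : Fin p → AffMap n)
    (h : ∀ j, Function.Commute g (affApply (f j))) (k : Fin p → ℕ) :
    Function.Commute g (wordApply f k) := by
  induction p with
  | zero =>
    have : wordApply f k = id := by simp [wordApply]
    rw [this]; exact Function.Commute.id_right
  | succ p ih =>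
    rw [wordApply_succ]
    exact ((h 0).iterate_right _).comp_right (ih _ (fun j => h j.succ) _)

lemma wordApply_add {n p : ℕ} (f : Fin p → AffMap n)
    (hc : ∀ i j, Function.Commute (affApply (f i)) (affApply (f j)))
    (k k' : Fin p → ℕ) :
    wordApply f (k + k') = wordApply f k ∘ wordApply f k' := by
  induction p with
  | zero =>
    funext x; simp [wordApply]
  | succ p ih =>
    rw [wordApply_succ, wordApply_succ, wordApply_succ]
    have tail := ih (fun j => f j.succ) (fun i j => hc i.succ j.succ)
      (fun j => k j.succ) (fun j => k' j.succ)
    have hcom : Function.Commute ((affApply (f 0))^[k' 0])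
        (wordApply (fun j => f j.succ) (fun j => k j.succ)) :=
      commute_wordApply _ _ (fun j => ((hc 0 j.succ).iterate_left _)) _
    funext x
    have h1 : (fun j : Fin p => k j.succ + k' j.succ)
        = (fun j => k j.succ) + (fun j => k' j.succ) := rfl
    simp only [Pi.add_apply, Function.comp_apply, Function.iterate_add_apply]
    rw [h1, tail]
    simp only [Function.comp_apply]
    exact congrArg _ (hcom _)

lemma wordApply_single {n p : ℕ} (f : Fin p → AffMap n) (j : Fin p) (m : ℕ) :
    wordApply f (Pi.single j m) = (affApply (f j))^[m] := by
  induction p with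
  | zero => exact j.elim0
  | succ p ih =>
    cases j using Fin.cases with
    | zero =>
      rw [wordApply_succ]
      have ht : (fun i : Fin p => (Pi.single (0 : Fin (p + 1)) m : Fin (p+1) → ℕ) i.succ)
          = (fun _ : Fin p => (0 : ℕ)) := by
        funext i; exact Pi.single_eq_of_ne (Fin.succ_ne_zero i) m
      rw [ht, wordApply_zero']
      simp
    | succ j' =>
      rw [wordApply_succ]
      have h0 : (Pi.single (Fin.succ j') m : Fin (p+1) → ℕ) (0 : Fin (p + 1)) = 0 := by
        rw [Pi.single_eq_of_ne (Fin.succ_ne_zero j').symm]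
      have ht : (fun i : Fin p => (Pi.single (Fin.succ j') m : Fin (p+1) → ℕ) i.succ)
          = (Pi.single j' m : Fin p → ℕ) := by
        funext i
        rcases eq_or_ne i j' with rfl | hne
        · simp
        · rw [Pi.single_eq_of_ne hne, Pi.single_eq_of_ne (fun h => hne (Fin.succ_injective _ h))]
      rw [h0, ht, ih]
      simp

lemma dense_image_affApply {n : ℕ} (f : AffMap n) (hf : IsUnit f.1) {s : Set (Fin n → ℂ)}
    (hs : Dense s) : Dense (affApply f '' s) := by
  have hcont : Continuous (affApply f) :=
    ((continuous_const : Continuous fun _ : Fin n → ℂ => f.1).matrix_mulVec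
      continuous_id).add continuous_const
  have hsurj : Function.Surjective (affApply f) := by
    intro y
    obtain ⟨x, hx⟩ := (Matrix.mulVec_surjective_iff_isUnit.mpr hf) (y - f.2)
    exact ⟨x, by simp [affApply, hx]⟩
  intro z
  obtain ⟨w, rfl⟩ := hsurj z
  exact image_closure_subset_closure_image hcont ⟨w, hs w, rfl⟩

lemma dense_image_iterate {α : Type*} [TopologicalSpace α] (g : α → α)
    (h : ∀ s : Set α, Dense s → Dense (g '' s)) (m : ℕ) :
    ∀ s : Set α, Dense s → Dense (g^[m] '' s) := by
  induction m with
  | zero => intro s hs; simpa using hs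
  | succ m ih =>
    intro s hs
    rw [Function.iterate_succ', Set.image_comp]
    exact h _ (ih _ hs)

lemma dense_image_wordApply {n p : ℕ} (f : Fin p → AffMap n) (k : Fin p → ℕ)
    (hk : ∀ j, k j ≠ 0 → IsUnit (f j).1) {s : Set (Fin n → ℂ)} (hs : Dense s) :
    Dense (wordApply f k '' s) := by
  induction p with
  | zero =>
    have : wordApply f k = id := by simp [wordApply]
    rw [this]; simpa using hs
  | succ p ih =>
    rw [wordApply_succ, Set.image_comp]
    have htail := ih (fun j => f j.succ) (fun j => k j.succ)
      (fun j hj => hk j.succ hj)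
    rcases Nat.eq_zero_or_pos (k 0) with h0 | h0
    · rw [h0]; simpa using htail
    · exact dense_image_iterate _
        (fun t ht => dense_image_affApply (f 0) (hk 0 h0.ne') ht) _ _ htail

lemma singular_range {n : ℕ} (f : AffMap n) (hf : ¬ IsUnit f.1) :
    IsClosed (Set.range (affApply f)) ∧ interior (Set.range (affApply f)) = ∅ := by
  set S : Submodule ℂ (Fin n → ℂ) := LinearMap.range f.1.mulVecLin with hS
  have hrange : Set.range (affApply f) = (fun y => y + f.2) '' (S : Set (Fin n → ℂ)) := by
    ext z
    constructor
    · rintro ⟨x, rfl⟩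
      exact ⟨f.1.mulVec x, ⟨x, rfl⟩, rfl⟩
    · rintro ⟨w, ⟨x, rfl⟩, rfl⟩
      exact ⟨x, rfl⟩
  have hScl : IsClosed (S : Set (Fin n → ℂ)) := Submodule.closed_of_finiteDimensional S
  have hSne : S ≠ ⊤ := by
    intro htop
    apply hf
    rw [← Matrix.mulVec_surjective_iff_isUnit]
    intro y
    have : y ∈ S := htop ▸ Submodule.mem_top
    obtain ⟨x, hx⟩ := this
    exact ⟨x, hx⟩
  have hSint : interior (S : Set (Fin n → ℂ)) = ∅ := by
    by_contra h
    exact hSne (Submodule.eq_top_of_nonempty_interior' S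
      (Set.nonempty_iff_ne_empty.mpr h))
  set heq := Homeomorph.addRight f.2 with hheq
  have hco : (fun y : Fin n → ℂ => y + f.2) = ⇑heq := rfl
  rw [hrange, hco]
  constructor
  · exact (Homeomorph.isClosed_image heq).mpr hScl
  · rw [← Homeomorph.image_interior heq, hSint, Set.image_empty]

lemma interior_iUnion_empty {X : Type*} [TopologicalSpace X] {p : ℕ} (D : Fin p → Set X)
    (hcl : ∀ j, IsClosed (D j)) (hint : ∀ j, interior (D j) = ∅) :
    interior (⋃ j, D j) = ∅ := by
  induction p with
  | zero => simp
  | succ p ih =>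
    have hun : (⋃ j, D j) = D 0 ∪ ⋃ j : Fin p, D j.succ := by
      ext z; simp [Set.mem_iUnion, Fin.exists_fin_succ]
    rw [hun, interior_union_isClosed_of_interior_empty (hcl 0)
      (ih _ (fun j => hcl j.succ) (fun j => hint j.succ))]
    exact hint 0

lemma tendsto_of_dist_lt {X : Type*} [MetricSpace X] {u : ℕ → X} {x : X}
    (h : ∀ m : ℕ, dist (u m) x < 1 / (m + 1)) : Tendsto u atTop (𝓝 x) := by
  refine tendsto_iff_dist_tendsto_zero.mpr ?_
  exact squeeze_zero (fun m => dist_nonneg) (fun m => (h m).le)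
    tendsto_one_div_add_atTop_nhds_zero_nat

lemma one_div_nat_pos (m : ℕ) : (0 : ℝ) < 1 / (m + 1) := by positivity

/-- **(Proposition 2.5, one direction, affine case.)** Let `𝒢` be an abelian
semigroup of affine maps of `ℂⁿ` generated by `f₁,…,f_p` (`p ≥ 1`). If `𝒢` is
hypercyclic, then `J_𝒢(x) = ℂⁿ` for every `x ∈ ℂⁿ`. -/
theorem Jset_eq_univ_of_hypercyclic
    (n p : ℕ) (hp : 1 ≤ p)
    (f : Fin p → AffMap n)
    (hcomm : ∀ i j, affComp (f i) (f j) = affComp (f j) (f i))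
    (hhyp : AffHypercyclic f) :
    ∀ x : Fin n → ℂ, Jset f x = Set.univ := by
  intro x
  ext y
  simp only [Set.mem_univ, iff_true]
  obtain ⟨v, hv⟩ := hhyp
  rcases Nat.eq_zero_or_pos n with hn | hn
  · -- trivial case n = 0
    subst hn
    haveI : Subsingleton (Fin 0 → ℂ) := ⟨fun a b => funext fun i => i.elim0⟩
    refine ⟨fun _ => x, fun m _ => m + 1, tendsto_const_nhds, ?_, ?_⟩
    · refine tendsto_atTop_mono (fun m => ?_) tendsto_id
      calc (m : ℕ) ≤ m + 1 := Nat.le_succ m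
      _ ≤ p * (m + 1) := Nat.le_mul_of_pos_left _ hp
      _ = ∑ _j : Fin p, (m + 1) := by simp [Finset.sum_const, mul_comm]
    · have hconst : (fun m : ℕ => wordApply f (fun _ => m + 1) ((fun _ => x) m))
          = fun _ => y := funext fun m => Subsingleton.elim _ _
      rw [hconst]
      exact tendsto_const_nhds
  · -- main case n ≥ 1
    have hcomm' : ∀ i j, Function.Commute (affApply (f i)) (affApply (f j)) :=
      fun i j => affApply_commute _ _ (hcomm i j)
    have hWadd : ∀ k k' : Fin p → ℕ,
        wordApply f (k + k') = wordApply f k ∘ wordApply f k' :=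
      wordApply_add f hcomm'
    set O : Set (Fin n → ℂ) :=
      {z | ∃ k : Fin p → ℕ, (∀ j, k j ≠ 0 → IsUnit (f j).1) ∧ wordApply f k v = z} with hOdef
    -- density of the "invertible words" orbit
    have hO : Dense O := by
      classical
      set D : Fin p → Set (Fin n → ℂ) := fun j =>
        if IsUnit (f j).1 then ∅ else Set.range (affApply (f j)) with hDdef
      have hDcl : ∀ j, IsClosed (D j) := by
        intro j
        by_cases h : IsUnit (f j).1
        · simp [hDdef, h]
        · simpa [hDdef, h] using (singular_range (f j) h).1
      have hDint : ∀ j, interior (D j) = ∅ := by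
        intro j
        by_cases h : IsUnit (f j).1
        · simp [hDdef, h]
        · simpa [hDdef, h] using (singular_range (f j) h).2
      have hsub : affOrbit f v ⊆ O ∪ ⋃ j, D j := by
        rintro z ⟨k, _, rfl⟩
        by_cases hk : ∀ j, k j ≠ 0 → IsUnit (f j).1
        · exact Or.inl ⟨k, hk, rfl⟩
        · push_neg at hk
          obtain ⟨j, hj1, hj2⟩ := hk
          refine Or.inr (Set.mem_iUnion.mpr ⟨j, ?_⟩)
          rw [hDdef]
          simp only [if_neg hj2]
          have hksplit : k = Pi.single j 1 + (k - Pi.single j 1) := by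
            funext i
            rcases eq_or_ne i j with rfl | hij
            · simp only [Pi.add_apply, Pi.sub_apply, Pi.single_eq_same]
              omega
            · simp only [Pi.add_apply, Pi.sub_apply, Pi.single_eq_of_ne hij]
              omega
          rw [hksplit, hWadd, wordApply_single]
          exact ⟨wordApply f (k - Pi.single j 1) v, by simp⟩
      have hclosed : IsClosed (⋃ j, D j) := isClosed_iUnion_of_finite hDcl
      have hint : interior (⋃ j, D j) = ∅ := interior_iUnion_empty D hDcl hDint
      have hdc : Dense ((⋃ j, D j)ᶜ) := interior_eq_empty_iff_dense_compl.mp hint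
      have hcl : (⋃ j, D j)ᶜ ⊆ closure O := by
        intro z hz
        have h1 : z ∈ closure (O ∪ ⋃ j, D j) := closure_mono hsub (hv z)
        rw [closure_union, hclosed.closure_eq] at h1
        exact h1.resolve_right hz
      intro z
      have h2 : closure ((⋃ j, D j)ᶜ) ⊆ closure O := by
        rw [← closure_closure (s := O)]
        exact closure_mono hcl
      exact h2 (hdc z)
    -- density of long invertible words
    haveI : Nontrivial (Fin n → ℂ) := by
      refine ⟨0, fun _ => 1, fun h => ?_⟩
      have := congrFun h ⟨0, hn⟩
      simp at this
    haveI : ∀ z : Fin n → ℂ, NeBot (𝓝[≠] z) := Module.punctured_nhds_neBot ℂ _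
    have hON : ∀ N : ℕ, Dense {z | ∃ k : Fin p → ℕ,
        (∀ j, k j ≠ 0 → IsUnit (f j).1) ∧ N ≤ ∑ j, k j ∧ wordApply f k v = z} := by
      intro N
      have hKfin : ({k : Fin p → ℕ | ∑ j, k j < N}).Finite := by
        refine Set.Finite.subset (Set.Finite.pi (t := fun _ : Fin p => Set.Iio N)
          (fun _ => Set.finite_Iio N)) ?_
        intro k hk
        rw [Set.mem_pi]
        intro j _
        have hle : k j ≤ ∑ i, k i :=
          Finset.single_le_sum (fun i _ => Nat.zero_le (k i)) (Finset.mem_univ j)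
        exact lt_of_le_of_lt hle hk
      have hFfin : ((fun k : Fin p → ℕ => wordApply f k v) '' {k | ∑ j, k j < N}).Finite :=
        hKfin.image _
      refine Dense.mono ?_ (hO.diff_finite hFfin)
      rintro z ⟨⟨k, hk1, hk2⟩, hz2⟩
      refine ⟨k, hk1, ?_, hk2⟩
      by_contra hlt
      refine hz2 ⟨k, ?_, hk2⟩
      simp only [Set.mem_setOf_eq]
      omega
    -- choose approximating words
    have hx : ∀ m : ℕ, ∃ a : Fin p → ℕ, (∀ j, a j ≠ 0 → IsUnit (f j).1) ∧
        dist (wordApply f a v) x < 1 / (m + 1) := by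
      intro m
      obtain ⟨z, hzball, hzO⟩ := (Metric.dense_iff.mp hO) x (1 / (m + 1)) (one_div_nat_pos m)
      obtain ⟨a, ha1, rfl⟩ := hzO
      exact ⟨a, ha1, Metric.mem_ball.mp hzball⟩
    choose a ha1 ha2 using hx
    have hy : ∀ m : ℕ, ∃ b : Fin p → ℕ, (∀ j, b j ≠ 0 → IsUnit (f j).1) ∧
        (m ≤ ∑ j, b j) ∧
        dist (wordApply f (a m) (wordApply f b v)) y < 1 / (m + 1) := by
      intro m
      have hdense := dense_image_wordApply f (a m) (ha1 m) (hON m)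
      obtain ⟨z, hzball, hzim⟩ :=
        (Metric.dense_iff.mp hdense) y (1 / (m + 1)) (one_div_nat_pos m)
      obtain ⟨w, ⟨b, hb1, hb2, rfl⟩, rfl⟩ := hzim
      exact ⟨b, hb1, hb2, Metric.mem_ball.mp hzball⟩
    choose b hb1 hb2 hb3 using hy
    refine ⟨fun m => wordApply f (a m) v, b, ?_, ?_, ?_⟩
    · exact tendsto_of_dist_lt ha2
    · exact tendsto_atTop_mono hb2 tendsto_id
    · have hswap : ∀ m, wordApply f (b m) (wordApply f (a m) v)
          = wordApply f (a m) (wordApply f (b m) v) := by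
        intro m
        have h1 := congrFun (hWadd (b m) (a m)) v
        have h2 := congrFun (hWadd (a m) (b m)) v
        rw [add_comm] at h1
        simp only [Function.comp_apply] at h1 h2
        rw [← h1, h2]
      have : (fun m => wordApply f (b m) (wordApply f (a m) v))
          = fun m => wordApply f (a m) (wordApply f (b m) v) := funext hswap
      rw [this]
      exact tendsto_of_dist_lt hb3
end
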